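/- Under the hypotheses of the Zygmund lemma (contraction semigroup R_t with ‖D²R_tφ‖₀ ≤ C₀ t^{-1}‖φ‖₀ on (0,1] and ‖R_tf - f‖₀ ≤ N t^{1/2} on [0,1]), the rescaled semigroup R̂_t = e^{-t}R_t satisfies ‖D² R̂_t f‖₀ ≤ 4C₀(N + ‖f‖₀) t^{-1/2} for t ∈ (0, 1/2]. -/

import Mathlib

/-!
Since `D²R_t f = D²R_t (f - R_t f) + D²R_{2t} f` and `‖f - R_t f‖₀ ≤ N √t`, the smoothing estimate
gives `‖D²R_t f‖₀ ≤ C₀ N / √t + ‖D²R_{2t} f‖₀`. Doubling `t` until it exceeds `1/2`, where the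
smoothing estimate bounds `‖D²R_t f‖₀` by `2 C₀ ‖f‖₀`, sums a geometric series with ratio `1/√2`.
-/

open Real Set

theorem le_div_sqrt_add_of_le_dyadic {g : ℝ → ℝ} {A B : ℝ} (hA : 0 ≤ A)
    (hstep : ∀ t ∈ Ioc (0 : ℝ) (1 / 2), g t ≤ A / √t + g (2 * t))
    (hbase : ∀ t ∈ Ioc (1 / 2 : ℝ) 1, g t ≤ B) :
    ∀ t ∈ Ioc (0 : ℝ) 1, g t ≤ (2 + √2) * A / √t + B := by
  suffices h : ∀ n : ℕ, ∀ t ∈ Ioc (0 : ℝ) 1, 1 / 2 < 2 ^ n * t →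
      g t ≤ (2 + √2) * A / √t + B by
    intro t ht
    obtain ⟨n, hn⟩ := pow_unbounded_of_one_lt (1 / t) (one_lt_two : (1 : ℝ) < 2)
    refine h n t ht ?_
    rw [div_lt_iff₀ ht.1] at hn
    linarith
  have hlarge : ∀ t ∈ Ioc (1 / 2 : ℝ) 1, g t ≤ (2 + √2) * A / √t + B := fun t ht ↦ by
    have : 0 ≤ (2 + √2) * A / √t := by positivity
    linarith [hbase t ht]
  intro n
  induction n with
  | zero =>
    intro t ht hn
    exact hlarge t ⟨by simpa using hn, ht.2⟩
  | succ n ih =>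
    intro t ht hn
    rcases lt_or_ge (1 / 2) t with hbig | hsmall
    · exact hlarge t ⟨hbig, ht.2⟩
    · have h2t := ih (2 * t) ⟨by linarith [ht.1], by linarith⟩ (by rw [pow_succ] at hn; linarith)
      have hsqrt : √(2 * t) = √2 * √t := sqrt_mul zero_le_two t
      have hst : 0 < √t := sqrt_pos.2 ht.1
      -- `2 + √2 = ∑ₖ 2^(-k/2)` is the fixed point of `c ↦ 1 + c / √2`.
      have hgeom : A / √t + ((2 + √2) * A / √(2 * t) + B) = (2 + √2) * A / √t + B := by
        rw [hsqrt]
        field_simp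
        linear_combination -A * sq_sqrt (zero_le_two : (0 : ℝ) ≤ 2)
      linarith [hstep t ⟨ht.1, hsmall⟩]

theorem eq_apply_sub_add_of_semigroup {E : Type*} [AddCommGroup E] [Module ℝ E]
    {R : ℝ → E → E} (hRsg : ∀ s t : ℝ, 0 ≤ s → 0 ≤ t → ∀ φ, R (s + t) φ = R s (R t φ))
    (hlin : ∀ t : ℝ, 0 ≤ t → IsLinearMap ℝ (R t)) {t : ℝ} (ht : 0 ≤ t) (f : E) :
    R t f = R t (f - R t f) + R (2 * t) f := by
  rw [(hlin t ht).map_sub, two_mul, hRsg t t ht ht]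
  abel

theorem norm_iteratedFDeriv_const_smul_le {𝕜 E F : Type*} [NontriviallyNormedField 𝕜]
    [NormedAddCommGroup E] [NormedSpace 𝕜 E] [NormedAddCommGroup F] [NormedSpace 𝕜 F]
    {g : E → F} {n : ℕ} {x : E} (hg : ContDiffAt 𝕜 n g x) {c : 𝕜} (hc : ‖c‖ ≤ 1) :
    ‖iteratedFDeriv 𝕜 n (fun y ↦ c • g y) x‖ ≤ ‖iteratedFDeriv 𝕜 n g x‖ := by
  rw [iteratedFDeriv_const_smul_apply' hg, norm_smul]
  exact mul_le_of_le_one_left (norm_nonneg _) hc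

section Smoothing

variable {H : Type*} [NormedAddCommGroup H] [InnerProductSpace ℝ H]

theorem norm_iteratedFDeriv_two_le_add_of_semigroup {R : ℝ → (H → ℝ) → (H → ℝ)}
    (hRsg : ∀ s t : ℝ, 0 ≤ s → 0 ≤ t → ∀ φ, R (s + t) φ = R s (R t φ))
    (hlin : ∀ t : ℝ, 0 ≤ t → IsLinearMap ℝ (R t))
    (hRcont : ∀ t : ℝ, 0 ≤ t → ∀ φ : H → ℝ, Continuous φ → Continuous (R t φ))
    {C₀ : ℝ} (hsmooth : ∀ φ : H → ℝ, Continuous φ → ∀ t ∈ Ioc (0 : ℝ) 1, ContDiff ℝ 2 (R t φ))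
    (hD2 : ∀ (φ : H → ℝ), Continuous φ → ∀ C : ℝ, (∀ x, |φ x| ≤ C) →
      ∀ t ∈ Ioc (0 : ℝ) 1, ∀ x, ‖iteratedFDeriv ℝ 2 (R t φ) x‖ ≤ C₀ / t * C)
    {f : H → ℝ} (hfc : Continuous f) {N : ℝ}
    (hN : ∀ t ∈ Icc (0 : ℝ) 1, ∀ x, |R t f x - f x| ≤ N * √t)
    {t : ℝ} (ht : t ∈ Ioc (0 : ℝ) (1 / 2)) (x : H) :
    ‖iteratedFDeriv ℝ 2 (R t f) x‖ ≤ C₀ * N / √t + ‖iteratedFDeriv ℝ 2 (R (2 * t) f) x‖ := by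
  have ht1 : t ∈ Ioc (0 : ℝ) 1 := ⟨ht.1, by linarith [ht.2]⟩
  have hφc : Continuous (f - R t f) := hfc.sub (hRcont t ht1.1.le f hfc)
  have hφb : ∀ y, |(f - R t f) y| ≤ N * √t := fun y ↦ by
    simpa only [Pi.sub_apply, abs_sub_comm] using hN t (Ioc_subset_Icc_self ht1) y
  have hcoef : C₀ / t * (N * √t) = C₀ * N / √t := by
    have hst : 0 < √t := sqrt_pos.2 ht.1
    rw [div_mul_eq_mul_div, div_eq_div_iff ht.1.ne' hst.ne', mul_assoc, mul_assoc,
      mul_self_sqrt ht.1.le]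
    ring
  rw [eq_apply_sub_add_of_semigroup hRsg hlin ht.1.le f,
    iteratedFDeriv_add_apply (hsmooth _ hφc t ht1).contDiffAt
      (hsmooth f hfc (2 * t) ⟨by linarith [ht.1], by linarith [ht.2]⟩).contDiffAt]
  grw [norm_add_le, hD2 _ hφc _ hφb t ht1 x, hcoef]

theorem norm_iteratedFDeriv_two_le_of_half_lt {R : ℝ → (H → ℝ) → (H → ℝ)} {C₀ : ℝ}
    (hC₀ : 0 ≤ C₀) (hD2 : ∀ (φ : H → ℝ), Continuous φ → ∀ C : ℝ, (∀ x, |φ x| ≤ C) →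
      ∀ t ∈ Ioc (0 : ℝ) 1, ∀ x, ‖iteratedFDeriv ℝ 2 (R t φ) x‖ ≤ C₀ / t * C)
    {f : H → ℝ} (hfc : Continuous f) {C : ℝ} (hfb : ∀ x, |f x| ≤ C)
    {t : ℝ} (ht : t ∈ Ioc (1 / 2 : ℝ) 1) (x : H) :
    ‖iteratedFDeriv ℝ 2 (R t f) x‖ ≤ 2 * C₀ * C := by
  have hC : 0 ≤ C := (abs_nonneg _).trans (hfb x)
  have ht0 : 0 < t := by linarith [ht.1]
  grw [hD2 f hfc C hfb t ⟨ht0, ht.2⟩ x, div_mul_eq_mul_div, div_le_iff₀ ht0]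
  nlinarith [mul_nonneg hC₀ hC, ht.1]

end Smoothing

theorem rescaled_semigroup_second_derivative_bound_general
    {H : Type*} [NormedAddCommGroup H] [InnerProductSpace ℝ H]
    (R : ℝ → (H → ℝ) → (H → ℝ))
    (hRsg : ∀ s t : ℝ, 0 ≤ s → 0 ≤ t → ∀ φ, R (s + t) φ = R s (R t φ))
    (hlin : ∀ t : ℝ, 0 ≤ t → IsLinearMap ℝ (R t))
    (hRcont : ∀ t : ℝ, 0 ≤ t → ∀ φ : H → ℝ, Continuous φ → Continuous (R t φ))
    (C₀ : ℝ)
    (hsmooth : ∀ φ : H → ℝ, Continuous φ → ∀ t ∈ Ioc (0 : ℝ) 1, ContDiff ℝ 2 (R t φ))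
    (hD2 : ∀ (φ : H → ℝ), Continuous φ → ∀ C : ℝ, (∀ x, |φ x| ≤ C) →
      ∀ t ∈ Ioc (0 : ℝ) 1, ∀ x, ‖iteratedFDeriv ℝ 2 (R t φ) x‖ ≤ C₀ / t * C)
    (f : H → ℝ) (hfc : Continuous f) (N Cf : ℝ)
    (hfb : ∀ x, |f x| ≤ Cf)
    (hN : ∀ t ∈ Icc (0 : ℝ) 1, ∀ x, |R t f x - f x| ≤ N * Real.sqrt t) :
    ∀ t ∈ Ioc (0 : ℝ) (1 / 2), ∀ x,
      ‖iteratedFDeriv ℝ 2 (fun y => Real.exp (-t) * R t f y) x‖ ≤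
        4 * C₀ * (N + Cf) / Real.sqrt t := by
  intro t ht x
  have ht1 : t ∈ Ioc (0 : ℝ) 1 := ⟨ht.1, by linarith [ht.2]⟩
  have hCf : 0 ≤ Cf := (abs_nonneg _).trans (hfb x)
  have hN0 : 0 ≤ N := by simpa using (abs_nonneg _).trans (hN 1 ⟨zero_le_one, le_rfl⟩ x)
  have hC₀ : 0 ≤ C₀ := by
    simpa using (norm_nonneg _).trans (hD2 0 continuous_const 1 (by simp) 1 ⟨one_pos, le_rfl⟩ x)
  have hdyadic := le_div_sqrt_add_of_le_dyadic (g := fun s ↦ ‖iteratedFDeriv ℝ 2 (R s f) x‖)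
    (mul_nonneg hC₀ hN0)
    (fun s hs ↦
      norm_iteratedFDeriv_two_le_add_of_semigroup hRsg hlin hRcont hsmooth hD2 hfc hN hs x)
    (fun s hs ↦ norm_iteratedFDeriv_two_le_of_half_lt hC₀ hD2 hfc hfb hs x) t ht1
  have hst : 0 < √t := sqrt_pos.2 ht.1
  have hsqrt2 : √2 ≤ 2 := by
    rw [sqrt_le_left zero_le_two]
    norm_num
  calc ‖iteratedFDeriv ℝ 2 (fun y ↦ exp (-t) * R t f y) x‖
      ≤ ‖iteratedFDeriv ℝ 2 (R t f) x‖ :=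
        norm_iteratedFDeriv_const_smul_le (hsmooth f hfc t ht1).contDiffAt
          (by simpa [abs_of_pos (exp_pos _)] using ht.1.le)
    _ ≤ (2 + √2) * (C₀ * N) / √t + 2 * C₀ * Cf := hdyadic
    _ ≤ 4 * C₀ * (N + Cf) / √t := by
      rw [div_add' _ _ _ hst.ne', div_le_div_iff_of_pos_right hst]
      nlinarith [mul_le_mul_of_nonneg_left hsqrt2 (mul_nonneg hC₀ hN0),
        mul_le_mul_of_nonneg_left (sqrt_le_one.2 ht1.2) (mul_nonneg hC₀ hCf)]

/-- Under the hypotheses of the Zygmund lemma, the rescaled semigroup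
`R̂_t = e^{-t} R_t` satisfies `‖D² R̂_t f‖₀ ≤ 4C₀(N + ‖f‖₀) t^{-1/2}` for
`t ∈ (0, 1/2]`. -/
theorem rescaled_semigroup_second_derivative_bound
    {H : Type*} [NormedAddCommGroup H] [InnerProductSpace ℝ H]
    (R : ℝ → (H → ℝ) → (H → ℝ))
    (hR0 : ∀ φ, R 0 φ = φ)
    (hRsg : ∀ s t : ℝ, 0 ≤ s → 0 ≤ t → ∀ φ, R (s + t) φ = R s (R t φ))
    (hlin : ∀ t : ℝ, 0 ≤ t → IsLinearMap ℝ (R t))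
    (hRcont : ∀ t : ℝ, 0 ≤ t → ∀ φ : H → ℝ, Continuous φ → Continuous (R t φ))
    (hcontr : ∀ t : ℝ, 0 ≤ t → ∀ (φ : H → ℝ) (C : ℝ),
      (∀ x, |φ x| ≤ C) → ∀ x, |R t φ x| ≤ C)
    (C₀ : ℝ)
    (hsmooth : ∀ φ : H → ℝ, Continuous φ → ∀ t ∈ Ioc (0 : ℝ) 1, ContDiff ℝ 2 (R t φ))
    (hD2 : ∀ (φ : H → ℝ), Continuous φ → ∀ C : ℝ, (∀ x, |φ x| ≤ C) →
      ∀ t ∈ Ioc (0 : ℝ) 1, ∀ x, ‖iteratedFDeriv ℝ 2 (R t φ) x‖ ≤ C₀ / t * C)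
    (f : H → ℝ) (hfc : Continuous f) (N Cf : ℝ)
    (hfb : ∀ x, |f x| ≤ Cf)
    (hN : ∀ t ∈ Icc (0 : ℝ) 1, ∀ x, |R t f x - f x| ≤ N * Real.sqrt t) :
    ∀ t ∈ Ioc (0 : ℝ) (1 / 2), ∀ x,
      ‖iteratedFDeriv ℝ 2 (fun y => Real.exp (-t) * R t f y) x‖ ≤
        4 * C₀ * (N + Cf) / Real.sqrt t :=
  rescaled_semigroup_second_derivative_bound_general R hRsg hlin hRcont C₀ hsmooth hD2 f hfc N Cf
    hfb hN
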